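/- No nontrivial element of N is finitary: if g is a nontrivial element of the subgroup N of G_A generated by {a⁻ⁿαaⁿ : n ∈ ℤ}, and (π₁, π₂, …) is the sequence of even permutations of X with g(x₁x₂x₃…) = π₁(x₁)π₂(x₂)π₃(x₃)…, then the set {i ∈ ℕ : πᵢ ≠ id} is infinite. -/

import Mathlib

/-!
We formalize the automaton `A` of the paper: alphabet `X = {1,2,3}` is encoded as
`Fin 3` (letter `i+1` ↦ `i`), states `a, b, c` are encoded as `0, 1, 2 : Fin 3`.
Each state induces a permutation of the space `ℕ → Fin 3` of infinite sequences.

Note on conventions: in the paper, products of tree automorphisms compose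
left-to-right (in a word `s₁s₂⋯sₙ`, the letter `s₁` acts first); in Mathlib,
`(f * g) w = f (g w)`, i.e. the right factor acts first.  Hence a paper word
`uv` is rendered as the Lean product `v * u`; e.g. the paper's `α = ab⁻¹`
(apply `a`, then `b⁻¹`) is `b⁻¹ * a` below.
-/

namespace Lamplighter

section Generic

variable {S X : Type*}

/-- The state of the automaton after reading the first `n` letters of `w`, starting at `s`. -/
def run (nxt : S → X → S) (s : S) (w : ℕ → X) : ℕ → S
  | 0 => s
  | n + 1 => nxt (run nxt s w n) (w n)

/-- The output sequence of the automaton started in state `s` reading `w`. -/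
def fwd (nxt : S → X → S) (out : S → Equiv.Perm X) (s : S) (w : ℕ → X) : ℕ → X :=
  fun n => out (run nxt s w n) (w n)

/-- Transition function of the inverse automaton. -/
def invNxt (nxt : S → X → S) (out : S → Equiv.Perm X) (s : S) (y : X) : S :=
  nxt s ((out s).symm y)

/-- The action of the inverse automaton, started at state `s`. -/
def bwd (nxt : S → X → S) (out : S → Equiv.Perm X) (s : S) (y : ℕ → X) : ℕ → X :=
  fun n => (out (run (invNxt nxt out) s y n)).symm (y n)

theorem run_inv_fwd (nxt : S → X → S) (out : S → Equiv.Perm X) (s : S) (w : ℕ → X) :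
    ∀ n, run (invNxt nxt out) s (fwd nxt out s w) n = run nxt s w n := by
  intro n
  induction n with
  | zero => rfl
  | succ n ih => simp [run, ih, invNxt, fwd]

theorem run_bwd (nxt : S → X → S) (out : S → Equiv.Perm X) (s : S) (y : ℕ → X) :
    ∀ n, run nxt s (bwd nxt out s y) n = run (invNxt nxt out) s y n := by
  intro n
  induction n with
  | zero => rfl
  | succ n ih => simp [run, ih, bwd, invNxt]

/-- The permutation of the space of infinite sequences induced by state `s`
of an invertible automaton. -/
def statePerm (nxt : S → X → S) (out : S → Equiv.Perm X) (s : S) : Equiv.Perm (ℕ → X) where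
  toFun := fwd nxt out s
  invFun := bwd nxt out s
  left_inv := fun w => funext fun n => by simp [bwd, run_inv_fwd, fwd]
  right_inv := fun y => funext fun n => by simp [fwd, run_bwd, bwd]

end Generic

/-- The alphabet `X = {1,2,3}`, encoded as `Fin 3`. -/
abbrev X3 := Fin 3

/-- Transition function of the automaton `A` (states `a = 0`, `b = 1`, `c = 2`):
from `a`: `1 ↦ a, 2 ↦ b, 3 ↦ c`; from `b`: `1 ↦ c, 2 ↦ a, 3 ↦ b`;
from `c`: `1 ↦ b, 2 ↦ c, 3 ↦ a`. -/
def nxtA : Fin 3 → X3 → Fin 3 := ![![0, 1, 2], ![2, 0, 1], ![1, 2, 0]]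

/-- Output permutations of the automaton `A`: state `a` acts on letters as the
transposition `(2 3)`, state `b` as `(1 3)`, state `c` as `(1 2)`. -/
def outA : Fin 3 → Equiv.Perm X3 := ![Equiv.swap 1 2, Equiv.swap 0 2, Equiv.swap 0 1]

/-- The permutation of `X^ℕ` given by state `a`. -/
def a : Equiv.Perm (ℕ → X3) := statePerm nxtA outA 0

/-- The permutation of `X^ℕ` given by state `b`. -/
def b : Equiv.Perm (ℕ → X3) := statePerm nxtA outA 1

/-- The permutation of `X^ℕ` given by state `c`. -/
def c : Equiv.Perm (ℕ → X3) := statePerm nxtA outA 2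

/-- The group `G_A` generated by the automaton `A`. -/
def GA : Subgroup (Equiv.Perm (ℕ → X3)) := Subgroup.closure {a, b, c}

/-- The element `α = ab⁻¹` of the paper (first apply `a`, then `b⁻¹`). -/
def α : Equiv.Perm (ℕ → X3) := b⁻¹ * a

/-- The set `W` of permutations acting coordinatewise by a sequence of even
permutations of the alphabet. -/
def W : Set (Equiv.Perm (ℕ → X3)) :=
  {g | ∃ π : ℕ → Equiv.Perm X3, (∀ n, Equiv.Perm.sign (π n) = 1) ∧
    ∀ (w : ℕ → X3) (n : ℕ), g w n = π n (w n)}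

/-- The subgroup `N` generated by the conjugates `a⁻ⁿ α aⁿ`, `n ∈ ℤ`
(in Lean's composition order: `aⁿ * α * a⁻ⁿ`). -/
def N : Subgroup (Equiv.Perm (ℕ → X3)) :=
  Subgroup.closure {g | ∃ n : ℤ, g = a ^ n * α * a ^ (-n)}

/-!
Identify `X^ℕ` with the power series ring `𝔽₃⟦X⟧` (a sequence is its sequence of coefficients).
Every state of `A` then acts by an affine map: `a` is multiplication by the unit
`ν = (X - 1)/(X + 1)` and `b` is `f ↦ ν f - 1/(X + 1)`, so `α = ab⁻¹` is the translation by
`ε = 1/(X - 1)` and `a⁻ⁿ α aⁿ` is the translation by `νⁿ ε`. Thus every element of `N` is a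
translation by some `f` in the `𝔽₃`-span `M` of the `νⁿ ε`, and it is finitary exactly when `f` is a
polynomial `P`. If the exponents occurring in `f` satisfy `|n| ≤ K`, then `(X - 1)^(K+1) (X + 1)^K f`
is a polynomial of degree `≤ 2K`, while `(X - 1)^(K+1) (X + 1)^K P` has degree `≥ 2K + 1` unless
`P = 0`.
-/

section

open PowerSeries

lemma nxtA_eq_sub (s x : ZMod 3) : nxtA s x = x - s := by
  fin_cases s <;> fin_cases x <;> rfl

lemma outA_eq_neg_sub (s x : ZMod 3) : outA s x = -x - s := by
  fin_cases s <;> fin_cases x <;> rfl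

noncomputable def toPowerSeries : (ℕ → X3) ≃ (ZMod 3)⟦X⟧ where
  toFun w := mk (R := ZMod 3) w
  invFun f n := coeff (R := ZMod 3) n f
  left_inv _ := funext fun _ => coeff_mk (R := ZMod 3) _ _
  right_inv _ := ext fun _ => coeff_mk _ _

lemma coeff_toPowerSeries (w : ℕ → X3) (n : ℕ) : coeff n (toPowerSeries w) = w n :=
  coeff_mk (R := ZMod 3) _ _

lemma perm_ext_toPowerSeries {g h : Equiv.Perm (ℕ → X3)}
    (H : ∀ w, toPowerSeries (g w) = toPowerSeries (h w)) : g = h :=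
  Equiv.ext fun w => toPowerSeries.injective (H w)

lemma toPowerSeries_run (s : ZMod 3) (w : ℕ → X3) :
    (X + 1) * toPowerSeries (run nxtA s w) = X * toPowerSeries w + C s := by
  have hrun (n : ℕ) : coeff (n + 1) (toPowerSeries (run nxtA s w)) =
      coeff n (toPowerSeries w) - coeff n (toPowerSeries (run nxtA s w)) := by
    simp only [coeff_toPowerSeries]
    exact nxtA_eq_sub _ _
  ext (_ | n)
  · simp only [add_mul, one_mul, map_add, coeff_zero_X_mul, coeff_zero_C, zero_add]
    exact coeff_toPowerSeries _ 0
  · simp only [add_mul, one_mul, map_add, coeff_succ_X_mul, coeff_C, hrun]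
    simp

lemma toPowerSeries_statePerm (s : ZMod 3) (w : ℕ → X3) :
    (X + 1) * toPowerSeries (statePerm nxtA outA s w) = (X - 1) * toPowerSeries w - C s := by
  have hout : toPowerSeries (statePerm nxtA outA s w) =
      -toPowerSeries w - toPowerSeries (run nxtA s w) := by
    ext n
    simp only [coeff_toPowerSeries, map_sub, map_neg]
    exact outA_eq_neg_sub _ _
  have hchar : (3 : (ZMod 3)⟦X⟧) = 0 := by
    rw [← map_ofNat C 3, show (3 : ZMod 3) = 0 from rfl, map_zero]
  rw [hout, mul_sub, toPowerSeries_run]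
  linear_combination (-X * toPowerSeries w) * hchar

noncomputable def unitXSubOne : (ZMod 3)⟦X⟧ˣ :=
  (isUnit_iff_constantCoeff (φ := X - 1)).2 (by simp) |>.unit

noncomputable def unitXAddOne : (ZMod 3)⟦X⟧ˣ :=
  (isUnit_iff_constantCoeff (φ := X + 1)).2 (by simp) |>.unit

@[simp]
lemma val_unitXSubOne : (unitXSubOne : (ZMod 3)⟦X⟧) = X - 1 := IsUnit.unit_spec _

@[simp]
lemma val_unitXAddOne : (unitXAddOne : (ZMod 3)⟦X⟧) = X + 1 := IsUnit.unit_spec _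

noncomputable def ν : (ZMod 3)⟦X⟧ˣ := unitXSubOne * unitXAddOne⁻¹

noncomputable def ε : (ZMod 3)⟦X⟧ˣ := unitXSubOne⁻¹

lemma toPowerSeries_a (w : ℕ → X3) : toPowerSeries (a w) = ν * toPowerSeries w := by
  have h := toPowerSeries_statePerm 0 w
  rw [map_zero, sub_zero] at h
  calc toPowerSeries (a w) = ↑unitXAddOne⁻¹ * ((X - 1) * toPowerSeries w) := by
        rw [Units.eq_inv_mul_iff_mul_eq, val_unitXAddOne]; exact h
    _ = ν * toPowerSeries w := by rw [ν, Units.val_mul, val_unitXSubOne]; ring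

lemma toPowerSeries_b (w : ℕ → X3) :
    toPowerSeries (b w) = ν * toPowerSeries w - ↑unitXAddOne⁻¹ := by
  have h := toPowerSeries_statePerm 1 w
  rw [map_one] at h
  calc toPowerSeries (b w) = ↑unitXAddOne⁻¹ * ((X - 1) * toPowerSeries w - 1) := by
        rw [Units.eq_inv_mul_iff_mul_eq, val_unitXAddOne]; exact h
    _ = ν * toPowerSeries w - ↑unitXAddOne⁻¹ := by rw [ν, Units.val_mul, val_unitXSubOne]; ring

lemma toPowerSeries_zpow_a_apply (n : ℤ) (w : ℕ → X3) :
    toPowerSeries ((a ^ n) w) = ↑(ν ^ n) * toPowerSeries w := by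
  induction n using Int.induction_on generalizing w with
  | zero => simp
  | succ n ih =>
    rw [zpow_add_one, Equiv.Perm.mul_apply, ih, toPowerSeries_a, ← mul_assoc, ← Units.val_mul,
      ← zpow_add_one]
  | pred n ih =>
    have h : toPowerSeries (a⁻¹ w) = ↑ν⁻¹ * toPowerSeries w := by
      rw [Units.eq_inv_mul_iff_mul_eq, ← toPowerSeries_a, ← Equiv.Perm.mul_apply, mul_inv_cancel,
        Equiv.Perm.one_apply]
    rw [zpow_sub_one, Equiv.Perm.mul_apply, ih, h, ← mul_assoc, ← Units.val_mul,
      ← zpow_sub_one]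

noncomputable def shift (f : (ZMod 3)⟦X⟧) : Equiv.Perm (ℕ → X3) :=
  toPowerSeries.symm.permCongr (Equiv.addLeft f)

lemma toPowerSeries_shift (f : (ZMod 3)⟦X⟧) (w : ℕ → X3) :
    toPowerSeries (shift f w) = f + toPowerSeries w := by
  simp [shift, Equiv.permCongr_apply]

lemma shift_zero : shift 0 = 1 :=
  perm_ext_toPowerSeries fun w => by simp [toPowerSeries_shift]

lemma shift_add (f g : (ZMod 3)⟦X⟧) : shift (f + g) = shift f * shift g :=
  perm_ext_toPowerSeries fun w => by simp [toPowerSeries_shift, add_assoc]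

lemma shift_neg (f : (ZMod 3)⟦X⟧) : shift (-f) = (shift f)⁻¹ := by
  rw [_root_.eq_inv_iff_mul_eq_one, ← shift_add, neg_add_cancel, shift_zero]

lemma α_eq_shift : α = shift ε := by
  refine perm_ext_toPowerSeries fun w => ?_
  rw [α, Equiv.Perm.mul_apply, Equiv.Perm.inv_eq_iff_eq.2]
  refine toPowerSeries.injective ?_
  rw [toPowerSeries_a, toPowerSeries_b, toPowerSeries_shift, mul_add, ← Units.val_mul, ν, ε,
    mul_assoc, mul_comm _ unitXSubOne⁻¹, ← mul_assoc, mul_inv_cancel, one_mul]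
  ring

lemma zpow_a_mul_α_mul_zpow_neg_a (n : ℤ) : a ^ n * α * a ^ (-n) = shift ↑(ν ^ n * ε) := by
  refine perm_ext_toPowerSeries fun w => ?_
  rw [α_eq_shift, Equiv.Perm.mul_apply, Equiv.Perm.mul_apply, toPowerSeries_zpow_a_apply,
    toPowerSeries_shift, toPowerSeries_zpow_a_apply, toPowerSeries_shift, mul_add, ← mul_assoc,
    ← Units.val_mul, ← Units.val_mul, ← zpow_add, add_neg_cancel, zpow_zero, Units.val_one,
    one_mul, Units.val_mul]

noncomputable def M : Submodule (ZMod 3) (ZMod 3)⟦X⟧ :=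
  Submodule.span (ZMod 3) (Set.range fun n : ℤ => ((ν ^ n * ε : (ZMod 3)⟦X⟧ˣ) : (ZMod 3)⟦X⟧))

lemma exists_shift_of_mem_N {g : Equiv.Perm (ℕ → X3)} (hg : g ∈ N) : ∃ f ∈ M, g = shift f := by
  induction hg using Subgroup.closure_induction with
  | mem g hg =>
    obtain ⟨n, rfl⟩ := hg
    exact ⟨_, Submodule.subset_span ⟨n, rfl⟩, zpow_a_mul_α_mul_zpow_neg_a n⟩
  | one => exact ⟨0, M.zero_mem, shift_zero.symm⟩
  | mul g h _ _ hg hh =>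
    obtain ⟨f, hf, rfl⟩ := hg
    obtain ⟨f', hf', rfl⟩ := hh
    exact ⟨f + f', M.add_mem hf hf', (shift_add f f').symm⟩
  | inv g _ hg =>
    obtain ⟨f, hf, rfl⟩ := hg
    exact ⟨-f, M.neg_mem hf, (shift_neg f).symm⟩

lemma exists_coe_eq_of_finite {R : Type*} [Semiring R] (f : R⟦X⟧)
    (hf : {n | coeff n f ≠ 0}.Finite) : ∃ P : Polynomial R, (P : R⟦X⟧) = f := by
  obtain ⟨D, hD⟩ := hf.bddAbove
  refine ⟨trunc (D + 1) f, ext fun n => ?_⟩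
  rw [Polynomial.coeff_coe, coeff_trunc]
  split_ifs with hn
  · rfl
  · by_contra h
    exact hn (Nat.lt_succ_of_le (hD (Ne.symm h)))

end

section

open Polynomial
open scoped PowerSeries

lemma natDegree_X_sub_C_pow_mul_X_add_C_pow {R : Type*} [CommRing R] [Nontrivial R] (r s : R)
    (i j : ℕ) : ((X - C r) ^ i * (X + C s) ^ j : R[X]).natDegree = i + j := by
  rw [((monic_X_sub_C r).pow i).natDegree_mul ((monic_X_add_C s).pow j),
    (monic_X_sub_C r).natDegree_pow, (monic_X_add_C s).natDegree_pow, natDegree_X_sub_C,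
    natDegree_X_add_C, mul_one, mul_one]

lemma exists_degree_le_coe_eq_mul_ν_zpow_mul_ε {m : ℤ} {K : ℕ} (hm : |m| ≤ K) :
    ∃ G : (ZMod 3)[X], G.degree ≤ ↑(2 * K) ∧
      (G : (ZMod 3)⟦X⟧) = ↑(unitXSubOne ^ (K + 1) * unitXAddOne ^ K * (ν ^ m * ε)) := by
  obtain ⟨hm₁, hm₂⟩ := abs_le.1 hm
  obtain ⟨i, hi⟩ : ∃ i : ℕ, (i : ℤ) = m + K := ⟨(m + K).toNat, by omega⟩
  obtain ⟨j, hj⟩ : ∃ j : ℕ, (j : ℤ) = K - m := ⟨(K - m).toNat, by omega⟩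
  refine ⟨(X - C 1) ^ i * (X + C 1) ^ j, degree_le_of_natDegree_le ?_, ?_⟩
  · rw [natDegree_X_sub_C_pow_mul_X_add_C_pow]
    omega
  · have key : unitXSubOne ^ (K + 1) * unitXAddOne ^ K * (ν ^ m * ε) =
        unitXSubOne ^ i * unitXAddOne ^ j := by
      rw [← zpow_natCast unitXSubOne i, ← zpow_natCast unitXAddOne j, hi, hj, ν, ε]
      calc _ = unitXSubOne ^ ((K + 1 : ℕ) + m + -1 : ℤ) * unitXAddOne ^ ((K : ℤ) + -m) := by
            simp only [zpow_add, zpow_natCast, mul_zpow, inv_zpow', zpow_neg, zpow_one]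
            simp only [mul_comm, mul_left_comm, mul_assoc]
        _ = _ := by rw [← sub_eq_add_neg]; push_cast; ring_nf
    simp [key]

lemma exists_degree_le_coe_eq_mul_of_mem_M {f : (ZMod 3)⟦X⟧} (hf : f ∈ M) :
    ∃ K : ℕ, ∃ G : (ZMod 3)[X], G.degree ≤ ↑(2 * K) ∧
      (G : (ZMod 3)⟦X⟧) = ↑(unitXSubOne ^ (K + 1) * unitXAddOne ^ K) * f := by
  obtain ⟨c, rfl⟩ := Finsupp.mem_span_range_iff_exists_finsupp.1 hf
  obtain ⟨K, hK⟩ : ∃ K : ℕ, ∀ m ∈ c.support, |m| ≤ K :=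
    ⟨c.support.sup Int.natAbs, fun m hm => by
      rw [Int.abs_eq_natAbs, Nat.cast_le]; exact Finset.le_sup (f := Int.natAbs) hm⟩
  suffices ((unitXSubOne ^ (K + 1) * unitXAddOne ^ K : (ZMod 3)⟦X⟧ˣ) : (ZMod 3)⟦X⟧) *
      (c.sum fun m x => x • ((ν ^ m * ε : (ZMod 3)⟦X⟧ˣ) : (ZMod 3)⟦X⟧)) ∈
      (degreeLE (ZMod 3) ↑(2 * K)).map (coeToPowerSeries.algHom (ZMod 3)).toLinearMap by
    obtain ⟨G, hG, hGf⟩ := this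
    exact ⟨K, G, mem_degreeLE.1 hG, by simpa [coeToPowerSeries.algHom_apply] using hGf⟩
  rw [Finsupp.mul_sum]
  refine Submodule.finsuppSum_mem _ _ _ _ fun m hm => ?_
  obtain ⟨G, hG, hGeq⟩ :=
    exists_degree_le_coe_eq_mul_ν_zpow_mul_ε (hK m (Finsupp.mem_support_iff.2 hm))
  rw [mul_smul_comm, ← Units.val_mul]
  exact Submodule.smul_mem _ _
    ⟨G, mem_degreeLE.2 hG, by simpa [coeToPowerSeries.algHom_apply] using hGeq⟩

theorem eq_zero_of_mem_M_of_coe_eq {f : (ZMod 3)⟦X⟧} (hf : f ∈ M) {P : (ZMod 3)[X]}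
    (hP : (P : (ZMod 3)⟦X⟧) = f) : f = 0 := by
  obtain ⟨K, G, hG, hGf⟩ := exists_degree_le_coe_eq_mul_of_mem_M hf
  set Q : (ZMod 3)[X] := (X - C 1) ^ (K + 1) * (X + C 1) ^ K with hQ
  have hQP : Q * P = G := coe_injective _ (by simp [hGf, ← hP, hQ])
  suffices P = 0 by rw [← hP, this, coe_zero]
  by_contra hP0
  have hle := natDegree_le_of_degree_le (hQP ▸ hG)
  rw [(((monic_X_sub_C 1).pow _).mul ((monic_X_add_C 1).pow _)).natDegree_mul' hP0,
    natDegree_X_sub_C_pow_mul_X_add_C_pow] at hle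
  omega

end

open PowerSeries

/-- No nontrivial element of `N` is finitary: if `g ∈ N` is
nontrivial and `(π₁, π₂, …)` is a sequence of even permutations of the alphabet
with `g(x₁x₂…) = π₁(x₁)π₂(x₂)…`, then `πᵢ ≠ 1` for infinitely many `i`. -/
theorem N_not_finitary :
    ∀ g ∈ N, g ≠ 1 →
      ∀ π : ℕ → Equiv.Perm X3, (∀ n, Equiv.Perm.sign (π n) = 1) →
        (∀ (w : ℕ → X3) (n : ℕ), g w n = π n (w n)) →
        {i : ℕ | π i ≠ 1}.Infinite := by
  intro g hg hg1 π _ hπ hfin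
  obtain ⟨f, hfM, rfl⟩ := exists_shift_of_mem_N hg
  have hsupp : {n | coeff n f ≠ 0} ⊆ {i | π i ≠ 1} := fun n hn h1 => hn <| by
    set w := toPowerSeries.symm 0
    calc coeff n f = coeff n (toPowerSeries (shift f w)) := by simp [w, toPowerSeries_shift]
      _ = coeff n (toPowerSeries w) := (coeff_toPowerSeries _ n).trans <|
          (hπ w n).trans <| by rw [h1, coeff_toPowerSeries]; rfl
      _ = 0 := by simp [w]
  obtain ⟨P, hP⟩ := exists_coe_eq_of_finite f (hfin.subset hsupp)
  exact hg1 (by rw [eq_zero_of_mem_M_of_coe_eq hfM hP, shift_zero])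

end Lamplighter
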